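/- arXiv:1301.6395 — 6 statements merged into one kernel-verified Lean document; each statement's English description precedes it below -/
import Mathlib

section
/- If v(θ) = u'(θ)/[u(θ),u'(θ)] where [·,·] denotes the determinant of two plane vectors, then u(θ) = -v'(θ)/[v(θ),v'(θ)]. -/
open Real

/-- Determinant of two plane vectors. -/
noncomputable def det2 (w₁ w₂ : ℝ × ℝ) : ℝ := w₁.1 * w₂.2 - w₁.2 * w₂.1

/-
Writing D = [u,u'], differentiating v = D⁻¹ u' gives v' = D⁻¹ u'' - ([u,u'']/D²) u', hence
[v,v'] = [u',u'']/D². The plane identity [u',u''] u = [u,u''] u' - [u,u'] u'' then turns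
-v'/[v,v'] back into u; positive curvature is what makes [v,v'] nonzero.
-/

theorem det2_self (w : ℝ × ℝ) : det2 w w = 0 := by
  unfold det2
  ring

theorem det2_smul_eq_det2_smul_sub_det2_smul (p q r : ℝ × ℝ) :
    det2 q r • p = det2 p r • q - det2 p q • r := by
  ext <;> simp only [det2, Prod.fst_sub, Prod.snd_sub, Prod.smul_fst, Prod.smul_snd,
    smul_eq_mul] <;> ring

theorem HasDerivAt.det2 {f g : ℝ → ℝ × ℝ} {f' g' : ℝ × ℝ} {x : ℝ}
    (hf : HasDerivAt f f' x) (hg : HasDerivAt g g' x) :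
    HasDerivAt (fun t => _root_.det2 (f t) (g t))
      (_root_.det2 f' (g x) + _root_.det2 (f x) g') x := by
  have hf₁ : HasDerivAt (fun t => (f t).1) f'.1 x := hf.fst
  have hf₂ : HasDerivAt (fun t => (f t).2) f'.2 x := hf.snd
  have hg₁ : HasDerivAt (fun t => (g t).1) g'.1 x := hg.fst
  have hg₂ : HasDerivAt (fun t => (g t).2) g'.2 x := hg.snd
  unfold _root_.det2
  refine ((hf₁.mul hg₂).sub (hf₂.mul hg₁)).congr_deriv ?_
  ring

/-- The derivative of `v = [u,u']⁻¹ • u'` at a point where `(u, u', u'') = (p, q, r)`. -/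
noncomputable def dualDeriv (p q r : ℝ × ℝ) : ℝ × ℝ :=
  (det2 p q)⁻¹ • r + (-det2 p r / det2 p q ^ 2) • q

theorem hasDerivAt_dual {u u' u'' : ℝ → ℝ × ℝ} {θ : ℝ}
    (hu : HasDerivAt u (u' θ) θ) (hu' : HasDerivAt u' (u'' θ) θ)
    (hdet : det2 (u θ) (u' θ) ≠ 0) :
    HasDerivAt (fun t => (det2 (u t) (u' t))⁻¹ • u' t) (dualDeriv (u θ) (u' θ) (u'' θ)) θ := by
  have hD : HasDerivAt (fun t => det2 (u t) (u' t)) (det2 (u θ) (u'' θ)) θ := by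
    simpa only [det2_self, zero_add] using hu.det2 hu'
  exact (hD.inv hdet).smul hu'

theorem det2_smul_dualDeriv (p q r : ℝ × ℝ) (hD : det2 p q ≠ 0) :
    det2 ((det2 p q)⁻¹ • q) (dualDeriv p q r) = det2 q r / det2 p q ^ 2 := by
  unfold dualDeriv
  simp only [det2, Prod.fst_add, Prod.snd_add, Prod.smul_fst, Prod.smul_snd, smul_eq_mul] at hD ⊢
  field_simp
  ring

theorem eq_neg_inv_det2_smul_dualDeriv (p q r : ℝ × ℝ) (hD : det2 p q ≠ 0) (hC : det2 q r ≠ 0) :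
    p = -((det2 ((det2 p q)⁻¹ • q) (dualDeriv p q r))⁻¹ • dualDeriv p q r) := by
  rw [det2_smul_dualDeriv p q r hD, inv_div]
  refine smul_right_injective _ hC ?_
  dsimp only
  rw [det2_smul_eq_det2_smul_sub_det2_smul]
  unfold dualDeriv
  simp only [smul_neg, smul_add, smul_smul]
  field_simp
  module

/-- If v = u'/[u,u'], then u = -v'/[v,v']. -/
theorem dual_of_dual (u u' u'' v : ℝ → ℝ × ℝ)
    (hu : ∀ θ, HasDerivAt u (u' θ) θ)
    (hu' : ∀ θ, HasDerivAt u' (u'' θ) θ)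
    (hdet : ∀ θ, 0 < det2 (u θ) (u' θ))
    (hcurv : ∀ θ, 0 < det2 (u' θ) (u'' θ))
    (hv : ∀ θ, v θ = (det2 (u θ) (u' θ))⁻¹ • u' θ) :
    ∀ θ, u θ = -((det2 (v θ) (deriv v θ))⁻¹ • deriv v θ) := by
  intro θ
  obtain rfl : v = fun t => (det2 (u t) (u' t))⁻¹ • u' t := funext hv
  rw [(hasDerivAt_dual (hu θ) (hu' θ) (hdet θ).ne').deriv]
  exact eq_neg_inv_det2_smul_dualDeriv _ _ _ (hdet θ).ne' (hcurv θ).ne'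
end

section
/- If two curves γ and γ₁ are both parameterized along u' (γ' = μ u', γ₁' = μ₁ u') and have the same u-evolute, i.e., γ - μu = γ₁ - μ₁u, then γ₁ is a u-equidistant of γ: there is a constant c with γ₁(θ) = γ(θ) + c·u(θ) for all θ. -/
/-! If `w = m • u` and `w' = m • u'`, then formally `m' • u = 0`, so `m` is locally constant
wherever `u ≠ 0`. To see that `m` is differentiable at all, write it near `θ` as the quotient
`ℓ ∘ w / ℓ ∘ u` for a functional `ℓ` with `ℓ (u θ) ≠ 0`. -/

open Real

section

variable {E : Type*} [NormedAddCommGroup E] [NormedSpace ℝ E]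
  {u u' w : ℝ → E} {m : ℝ → ℝ}

theorem hasDerivAt_zero_of_eq_smul {θ : ℝ} (hu : HasDerivAt u (u' θ) θ)
    (hw : HasDerivAt w (m θ • u' θ) θ) (hwm : ∀ t, w t = m t • u t) (hu₀ : u θ ≠ 0) :
    HasDerivAt m 0 θ := by
  obtain ⟨ℓ, -, hℓ⟩ := exists_dual_vector'' ℝ (u θ)
  have hℓu : ℓ (u θ) ≠ 0 := by rw [hℓ]; exact_mod_cast norm_ne_zero_iff.mpr hu₀
  have hquot : (fun t => ℓ (w t) / ℓ (u t)) =ᶠ[nhds θ] m := by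
    filter_upwards [(ℓ.continuous.continuousAt.comp hu.continuousAt).eventually_ne hℓu]
      with t ht
    simp only [Function.comp_apply] at ht
    rw [hwm, map_smul, smul_eq_mul, mul_div_assoc, div_self ht, mul_one]
  have hderiv := ((ℓ.hasFDerivAt.comp_hasDerivAt θ hw).div
    (ℓ.hasFDerivAt.comp_hasDerivAt θ hu) hℓu).congr_of_eventuallyEq hquot.symm
  rwa [Function.comp_apply, Function.comp_apply, hwm θ, map_smul, map_smul, smul_eq_mul,
    smul_eq_mul, mul_right_comm, sub_self, zero_div] at hderiv

theorem exists_const_of_eq_smul (hu : ∀ θ, HasDerivAt u (u' θ) θ)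
    (hw : ∀ θ, HasDerivAt w (m θ • u' θ) θ) (hwm : ∀ t, w t = m t • u t)
    (hu₀ : ∀ θ, u θ ≠ 0) : ∃ c, ∀ θ, m θ = c := by
  have hm' θ := hasDerivAt_zero_of_eq_smul (hu θ) (hw θ) hwm (hu₀ θ)
  exact ⟨m 0, fun θ => is_const_of_deriv_eq_zero (fun t => (hm' t).differentiableAt)
    (fun t => (hm' t).deriv) θ 0⟩

end

theorem same_evolute_equidistant_general (u u' γ γ₁ : ℝ → ℝ × ℝ) (μ μ₁ : ℝ → ℝ)
    (hu : ∀ θ, HasDerivAt u (u' θ) θ)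
    (hdet : ∀ θ, 0 < det2 (u θ) (u' θ))
    (hγ : ∀ θ, HasDerivAt γ (μ θ • u' θ) θ)
    (hγ₁ : ∀ θ, HasDerivAt γ₁ (μ₁ θ • u' θ) θ)
    (hev : ∀ θ, γ θ - μ θ • u θ = γ₁ θ - μ₁ θ • u θ) :
    ∃ c : ℝ, ∀ θ, γ₁ θ = γ θ + c • u θ := by
  have hdiff θ : (γ₁ - γ) θ = (μ₁ - μ) θ • u θ := by
    rw [Pi.sub_apply, Pi.sub_apply, sub_smul, sub_eq_sub_iff_sub_eq_sub]
    exact (hev θ).symm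
  have hdiff_deriv θ : HasDerivAt (γ₁ - γ) ((μ₁ - μ) θ • u' θ) θ := by
    simpa only [Pi.sub_apply, sub_smul] using (hγ₁ θ).sub (hγ θ)
  have hu₀ θ : u θ ≠ 0 := fun h => by simpa [h, det2] using hdet θ
  obtain ⟨c, hc⟩ := exists_const_of_eq_smul hu hdiff_deriv hdiff hu₀
  exact ⟨c, fun θ => by rw [← hc θ, ← hdiff θ, Pi.sub_apply, add_sub_cancel]⟩

/-- Two curves parameterized along u' with the same u-evolute are u-equidistants
of each other. -/
theorem same_evolute_equidistant (u u' u'' γ γ₁ : ℝ → ℝ × ℝ) (μ μ₁ : ℝ → ℝ)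
    (hu : ∀ θ, HasDerivAt u (u' θ) θ)
    (hu' : ∀ θ, HasDerivAt u' (u'' θ) θ)
    (hdet : ∀ θ, 0 < det2 (u θ) (u' θ))
    (hγ : ∀ θ, HasDerivAt γ (μ θ • u' θ) θ)
    (hγ₁ : ∀ θ, HasDerivAt γ₁ (μ₁ θ • u' θ) θ)
    (hev : ∀ θ, γ θ - μ θ • u θ = γ₁ θ - μ₁ θ • u θ) :
    ∃ c : ℝ, ∀ θ, γ₁ θ = γ θ + c • u θ :=
  same_evolute_equidistant_general u u' γ γ₁ μ μ₁ hu hdet hγ hγ₁ hev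
end

section
/- Up to homothety there is a unique symmetric curve parallel to a convex curve γ: if a symmetric curve u (u(θ+π) = -u(θ)) has tangent directions parallel to those of γ at each θ, and γ = M + c(θ)u with M the area evolute (midpoint curve) of γ, then c(θ) is constant; consequently u is homothetic to u(γ)(θ) = ½(γ(θ) - γ(θ+π)). -/
open Real

/-!
Differentiating `c • u = ½(γ(θ) - γ(θ + π))` gives `c • u' + c' • u = ½(λ(θ) + λ(θ + π)) e_θ`,
because `γ'(θ + π)` points along `e_{θ+π} = -e_θ`. Since `u'` is also a multiple of `e_θ` and
`u` is transversal to `u'`, the `u`-component `c'` vanishes and the `e_θ`-component forces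
`c ≠ 0`. Hence `c` is a nonzero constant and `u = c⁻¹ • u(γ)`.
-/

theorem det2_smul_right (v w : ℝ × ℝ) (t : ℝ) : det2 v (t • w) = t * det2 v w := by
  simp only [det2, Prod.smul_fst, Prod.smul_snd, smul_eq_mul]
  ring

theorem eq_zero_of_smul_eq_smul_of_det2_ne_zero {v w : ℝ × ℝ} {a b : ℝ}
    (hdet : det2 v w ≠ 0) (h : a • v = b • w) : a = 0 ∧ b = 0 := by
  obtain ⟨h₁, h₂⟩ := Prod.ext_iff.mp h
  simp only [Prod.smul_fst, Prod.smul_snd, smul_eq_mul] at h₁ h₂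
  have ha : a * det2 v w = 0 := by unfold det2; linear_combination w.2 * h₁ - w.1 * h₂
  have hb : b * det2 v w = 0 := by unfold det2; linear_combination v.2 * h₁ - v.1 * h₂
  exact ⟨(mul_eq_zero.mp ha).resolve_right hdet, (mul_eq_zero.mp hb).resolve_right hdet⟩

theorem eq_zero_and_ne_zero_of_smul_add_smul {v v' e : ℝ × ℝ} {a a' s t : ℝ}
    (hdet : det2 v v' ≠ 0) (hv' : v' = t • e) (hs : s ≠ 0) (h : a • v' + a' • v = s • e) :
    a' = 0 ∧ a ≠ 0 := by
  have hdet' : det2 v e ≠ 0 := by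
    rw [hv', det2_smul_right] at hdet
    exact right_ne_zero_of_mul hdet
  have hcomb : a' • v = (s - a * t) • e := by
    rw [hv'] at h
    rw [sub_smul, mul_smul, ← h]
    abel
  obtain ⟨ha', hst⟩ := eq_zero_of_smul_eq_smul_of_det2_ne_zero hdet' hcomb
  refine ⟨ha', fun ha => hs ?_⟩
  simpa [ha] using hst

theorem tangent_add_pi (θ : ℝ) :
    ((-sin (θ + π), cos (θ + π)) : ℝ × ℝ) = -((-sin θ, cos θ) : ℝ × ℝ) := by
  simp only [sin_add_pi, cos_add_pi, Prod.neg_mk]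

theorem hasDerivAt_half_sub_antipodal {γ γ' : ℝ → ℝ × ℝ} {lam : ℝ → ℝ}
    (hγ : ∀ θ, HasDerivAt γ (γ' θ) θ) (hγ' : ∀ θ, γ' θ = lam θ • (-sin θ, cos θ)) (θ : ℝ) :
    HasDerivAt (fun s => (1/2 : ℝ) • (γ s - γ (s + π)))
      (((lam θ + lam (θ + π)) / 2) • ((-sin θ, cos θ) : ℝ × ℝ)) θ := by
  refine (((hγ θ).sub ((hγ (θ + π)).comp_add_const θ π)).const_smul (1/2 : ℝ)).congr_deriv ?_
  rw [hγ', hγ', tangent_add_pi, smul_neg, sub_neg_eq_add, ← add_smul, smul_smul]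
  ring_nf

theorem unique_symmetric_parallel_general (γ γ' u u' : ℝ → ℝ × ℝ) (lam c c' : ℝ → ℝ)
    (hγ : ∀ θ, HasDerivAt γ (γ' θ) θ)
    (hγ' : ∀ θ, γ' θ = lam θ • (-Real.sin θ, Real.cos θ))
    (hlam : ∀ θ, 0 < lam θ)
    (hu : ∀ θ, HasDerivAt u (u' θ) θ)
    (hudet : ∀ θ, 0 < det2 (u θ) (u' θ))
    (hpar : ∀ θ, ∃ t : ℝ, u' θ = t • γ' θ)
    (hc : ∀ θ, HasDerivAt c (c' θ) θ)
    (hdecomp : ∀ θ, γ θ = (1/2 : ℝ) • (γ θ + γ (θ + π)) + c θ • u θ) :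
    (∀ θ₁ θ₂, c θ₁ = c θ₂) ∧
    ∃ r : ℝ, ∀ θ, u θ = r • ((1/2 : ℝ) • (γ θ - γ (θ + π))) := by
  have hwidth : ∀ θ, c θ • u θ = (1/2 : ℝ) • (γ θ - γ (θ + π)) := fun θ => by
    linear_combination (norm := module) -hdecomp θ
  have hc'_c : ∀ θ, c' θ = 0 ∧ c θ ≠ 0 := fun θ => by
    obtain ⟨t, ht⟩ := hpar θ
    have hderiv : c θ • u' θ + c' θ • u θ = ((lam θ + lam (θ + π)) / 2) • (-sin θ, cos θ) := by
      have h := hasDerivAt_half_sub_antipodal hγ hγ' θ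
      rw [← funext hwidth] at h
      exact ((hc θ).smul (hu θ)).unique h
    refine eq_zero_and_ne_zero_of_smul_add_smul (t := t * lam θ) (hudet θ).ne' ?_ ?_ hderiv
    · rw [ht, hγ', smul_smul]
    · linarith [hlam θ, hlam (θ + π)]
  have hconst : ∀ θ₁ θ₂, c θ₁ = c θ₂ :=
    is_const_of_deriv_eq_zero (fun θ => (hc θ).differentiableAt)
      (fun θ => (hc θ).deriv.trans (hc'_c θ).1)
  refine ⟨hconst, (c 0)⁻¹, fun θ => ?_⟩
  rw [← hwidth θ, hconst θ 0, inv_smul_smul₀ (hc'_c 0).2]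

/-- Up to homothety, the only symmetric curve parallel to a convex curve γ is
u(γ)(θ) = ½(γ(θ) - γ(θ+π)): if γ = M + c(θ)u with u symmetric and parallel to γ,
then c is constant and u is homothetic to u(γ). -/
theorem unique_symmetric_parallel (γ γ' u u' : ℝ → ℝ × ℝ) (lam c c' : ℝ → ℝ)
    (hγ : ∀ θ, HasDerivAt γ (γ' θ) θ)
    (hγ' : ∀ θ, γ' θ = lam θ • (-Real.sin θ, Real.cos θ))
    (hlam : ∀ θ, 0 < lam θ)
    (hγper : ∀ θ, γ (θ + 2 * π) = γ θ)
    (hu : ∀ θ, HasDerivAt u (u' θ) θ)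
    (husym : ∀ θ, u (θ + π) = -u θ)
    (hudet : ∀ θ, 0 < det2 (u θ) (u' θ))
    (hpar : ∀ θ, ∃ t : ℝ, u' θ = t • γ' θ)
    (hc : ∀ θ, HasDerivAt c (c' θ) θ)
    (hdecomp : ∀ θ, γ θ = (1/2 : ℝ) • (γ θ + γ (θ + π)) + c θ • u θ) :
    (∀ θ₁ θ₂, c θ₁ = c θ₂) ∧
    ∃ r : ℝ, ∀ θ, u θ = r • ((1/2 : ℝ) • (γ θ - γ (θ + π))) :=
  unique_symmetric_parallel_general γ γ' u u' lam c c' hγ hγ' hlam hu hudet hpar hc hdecomp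
end

section
/- Barbier's theorem in the Minkowski plane: for c large enough that γ_c = M + c·u is convex, the v-length of γ_c (with respect to the dual norm) equals 2A(u)·c, where A(u) is the area enclosed by u. Equivalently, ∫₀^{2π} (α(θ)+c)[u,u'](θ) dθ = 2c·A(u). -/
/-!
Differentiating `u (θ + π) = -u θ` shows that `u'` is also `π`-antiperiodic, so `[u, u']` is
`π`-periodic and `α [u, u']` is `π`-antiperiodic. An antiperiodic function integrates to zero
over twice its antiperiod, since the two halves cancel; hence only `c ∫ [u, u'] = 2 c A(u)`
survives.
-/

open Real

open Function intervalIntegral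

theorem det2_neg_neg (w₁ w₂ : ℝ × ℝ) : det2 (-w₁) (-w₂) = det2 w₁ w₂ := by
  simp only [det2, Prod.fst_neg, Prod.snd_neg]
  ring

namespace Function

variable {E : Type*} [NormedAddCommGroup E] [NormedSpace ℝ E]

theorem Antiperiodic.mul_periodic {α β : Type*} [Add α] [Mul β] [HasDistribNeg β]
    {f g : α → β} {c : α} (hf : Antiperiodic f c) (hg : Periodic g c) :
    Antiperiodic (f * g) c := fun x => by
  simp only [Pi.mul_apply, hf x, hg x, neg_mul]

theorem Antiperiodic.det2 {α : Type*} [Add α] {f g : α → ℝ × ℝ} {c : α}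
    (hf : Antiperiodic f c) (hg : Antiperiodic g c) :
    Periodic (fun x => det2 (f x) (g x)) c := fun x => by
  simp only [hf x, hg x, det2_neg_neg]

theorem Antiperiodic.antiperiodic_of_hasDerivAt {f f' : ℝ → E} {c : ℝ} (hf : Antiperiodic f c)
    (hd : ∀ x, HasDerivAt f (f' x) x) : Antiperiodic f' c := fun x => by
  have hshift : HasDerivAt (fun y => f (y + c)) (f' (x + c)) x := (hd (x + c)).comp_add_const x c
  have hneg : HasDerivAt (fun y => f (y + c)) (-f' x) x := by
    simpa only [hf.funext] using (hd x).neg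
  exact hshift.unique hneg

theorem Antiperiodic.intervalIntegral_add_two_mul_eq_zero {f : ℝ → E} {c : ℝ}
    (hf : Antiperiodic f c) (a : ℝ)
    (hint : IntervalIntegrable f MeasureTheory.volume a (a + 2 * c)) :
    ∫ x in a..a + 2 * c, f x = 0 := by
  have hmid : a + c ∈ Set.uIcc a (a + 2 * c) := by
    rcases le_total 0 c with hc | hc
    · exact Set.mem_uIcc.2 (Or.inl ⟨by linarith, by linarith⟩)
    · exact Set.mem_uIcc.2 (Or.inr ⟨by linarith, by linarith⟩)
  have hfirst := hint.mono_set (Set.uIcc_subset_uIcc_left hmid)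
  have hsecond := hint.mono_set (Set.uIcc_subset_uIcc_right hmid)
  calc ∫ x in a..a + 2 * c, f x
      = (∫ x in a..a + c, f x) + ∫ x in a + c..a + c + c, f x := by
        rw [integral_add_adjacent_intervals hfirst (by rwa [add_assoc, ← two_mul])]
        ring_nf
    _ = (∫ x in a..a + c, f x) + ∫ x in a..a + c, f (x + c) := by
        rw [integral_comp_add_right]
    _ = 0 := by simp only [hf _, integral_neg, add_neg_cancel]

end Function

/-- Barbier's theorem in the Minkowski plane: the v-length of the equidistant
γ_c = M + c·u equals 2·A(u)·c. -/
theorem barbier (u u' : ℝ → ℝ × ℝ) (α : ℝ → ℝ) (c : ℝ)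
    (hu : ∀ θ, HasDerivAt u (u' θ) θ)
    (hsym : ∀ θ, u (θ + π) = -u θ)
    (hcontu' : Continuous u')
    (hcontα : Continuous α)
    (hαsym : ∀ θ, α (θ + π) = -α θ) :
    ∫ θ in (0:ℝ)..(2 * π), (α θ + c) * det2 (u θ) (u' θ)
      = 2 * c * ((1/2 : ℝ) * ∫ θ in (0:ℝ)..(2 * π), det2 (u θ) (u' θ)) := by
  set A : ℝ → ℝ := fun θ => det2 (u θ) (u' θ)
  have hcontA : Continuous A := by
    have hcontu : Continuous u := continuous_iff_continuousAt.2 fun θ => (hu θ).continuousAt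
    simp only [A, det2]
    fun_prop
  have hcontαA : Continuous fun θ => α θ * A θ := hcontα.mul hcontA
  have hA : Periodic A π :=
    Antiperiodic.det2 hsym (Antiperiodic.antiperiodic_of_hasDerivAt hsym hu)
  have hαA : ∫ θ in (0:ℝ)..(2 * π), α θ * A θ = 0 := by
    simpa using (Antiperiodic.mul_periodic hαsym hA).intervalIntegral_add_two_mul_eq_zero 0
      (hcontαA.intervalIntegrable _ _)
  calc ∫ θ in (0:ℝ)..(2 * π), (α θ + c) * A θ
      = (∫ θ in (0:ℝ)..(2 * π), α θ * A θ) + c * ∫ θ in (0:ℝ)..(2 * π), A θ := by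
        simp only [add_mul]
        rw [integral_add (hcontαA.intervalIntegrable _ _)
          ((hcontA.const_mul c).intervalIntegrable _ _), integral_const_mul]
    _ = 2 * c * ((1/2 : ℝ) * ∫ θ in (0:ℝ)..(2 * π), A θ) := by
        rw [hαA]
        ring
end

section
/- Define N(θ) = M(θ) + β(θ)v(θ) where β(θ) = ½∫_θ^{θ+π} α(s)[u,u'](s) ds. Then N'(θ) = β(θ)v'(θ); in particular the v-equidistants η_d = N + dv are constant v-width curves with v-curvature radius β + d, and the v-evolute of each η_d is M. -/
open Real

/-- β(θ) = ½∫_θ^{θ+π} α(s)[u,u'](s) ds. -/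
noncomputable def betaOf (u u' : ℝ → ℝ × ℝ) (α : ℝ → ℝ) (θ : ℝ) : ℝ :=
  (1/2 : ℝ) * ∫ s in θ..(θ + Real.pi), α s * det2 (u s) (u' s)

open Function

/-!
Since `α` and `u` are `π`-antiperiodic, so is `f = α [u,u']`, hence
`β' = ½ (f(θ + π) - f θ) = -f θ = -α [u,u']`, and `β` is `π`-antiperiodic as well.
Then `(M + βv)' = α u' - α [u,u'] v + β v' = β v'` because `[u,u'] v = u'`.
The remaining claims are linear algebra, using that `M` is `π`-periodic and `v`, `β` are
`π`-antiperiodic.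
-/

theorem det2_neg_neg_s13 (a b : ℝ × ℝ) : det2 (-a) (-b) = det2 a b := by
  simp only [det2, Prod.fst_neg, Prod.snd_neg]
  ring

section Antiperiodic

variable {E : Type*} [NormedAddCommGroup E] [NormedSpace ℝ E]

theorem Function.Antiperiodic.hasDerivAt_antiperiodic {f f' : ℝ → E} {c : ℝ}
    (hf : Antiperiodic f c) (hd : ∀ x, HasDerivAt f (f' x) x) : Antiperiodic f' c := fun x =>
  ((hd (x + c)).comp_add_const x c).unique <|
    (hd x).neg.congr_of_eventuallyEq (Filter.Eventually.of_forall hf)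

theorem hasDerivAt_intervalIntegral_add_const [CompleteSpace E] {f : ℝ → E}
    (hf : Continuous f) (c x : ℝ) :
    HasDerivAt (fun y => ∫ s in y..y + c, f s) (f (x + c) - f x) x := by
  have hprim : ∀ y, HasDerivAt (fun z => ∫ s in (0 : ℝ)..z, f s) (f y) y := fun y =>
    hf.integral_hasStrictDerivAt 0 y |>.hasDerivAt
  have hsplit : (fun y => ∫ s in y..y + c, f s)
      = fun y => (∫ s in (0 : ℝ)..y + c, f s) - ∫ s in (0 : ℝ)..y, f s := by
    funext y
    rw [intervalIntegral.integral_interval_sub_left (hf.intervalIntegrable _ _)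
      (hf.intervalIntegrable _ _)]
  rw [hsplit]
  exact ((hprim (x + c)).comp_add_const x c).sub (hprim x)

theorem Function.Antiperiodic.intervalIntegral_add_const {f : ℝ → E} {c : ℝ}
    (hf : Antiperiodic f c) : Antiperiodic (fun x => ∫ s in x..x + c, f s) c := fun x => by
  simp only [← intervalIntegral.integral_comp_add_right, hf _, intervalIntegral.integral_neg]

end Antiperiodic

section Involute

variable {u u' : ℝ → ℝ × ℝ} {α : ℝ → ℝ}

theorem antiperiodic_mul_det2 {c : ℝ} (hα : Antiperiodic α c) (hu : Antiperiodic u c)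
    (hu' : Antiperiodic u' c) : Antiperiodic (fun s => α s * det2 (u s) (u' s)) c := fun s => by
  simp only [hα s, hu s, hu' s, det2_neg_neg_s13, neg_mul]

theorem betaOf_antiperiodic (hα : Antiperiodic α π) (hu : Antiperiodic u π)
    (hu' : Antiperiodic u' π) : Antiperiodic (betaOf u u' α) π := fun θ => by
  simp only [betaOf, (antiperiodic_mul_det2 hα hu hu').intervalIntegral_add_const θ, mul_neg]

theorem hasDerivAt_betaOf (hα : Antiperiodic α π) (hu : Antiperiodic u π)
    (hu' : Antiperiodic u' π) (hcα : Continuous α) (hcu : Continuous u) (hcu' : Continuous u')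
    (θ : ℝ) : HasDerivAt (betaOf u u' α) (-(α θ * det2 (u θ) (u' θ))) θ := by
  have hcf : Continuous fun s => α s * det2 (u s) (u' s) := by
    unfold det2
    fun_prop
  have hwindow := (hasDerivAt_intervalIntegral_add_const hcf π θ).const_mul (1 / 2 : ℝ)
  rw [hα θ, hu θ, hu' θ, det2_neg_neg_s13] at hwindow
  refine hwindow.congr_deriv ?_
  ring

theorem antiperiodic_dual {c : ℝ} (hu : Antiperiodic u c) (hu' : Antiperiodic u' c) :
    Antiperiodic (fun θ => (det2 (u θ) (u' θ))⁻¹ • u' θ) c := fun θ => by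
  simp only [hu θ, hu' θ, det2_neg_neg_s13, smul_neg]

end Involute

theorem hasDerivAt_add_smul_of_eq_inv_smul {E : Type*} [NormedAddCommGroup E]
    [NormedSpace ℝ E] {M v : ℝ → E} {β : ℝ → ℝ} {a D θ : ℝ} {w v' : E}
    (hM : HasDerivAt M (a • w) θ) (hβ : HasDerivAt β (-(a * D)) θ) (hv : HasDerivAt v v' θ)
    (hvθ : v θ = D⁻¹ • w) (hD : D ≠ 0) :
    HasDerivAt (fun s => M s + β s • v s) (β θ • v') θ := by
  refine (hM.add (hβ.smul hv)).congr_deriv ?_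
  rw [hvθ, smul_smul, neg_mul, mul_assoc, mul_inv_cancel₀ hD, mul_one, neg_smul]
  abel

theorem involute_properties_general (u u' v v' M : ℝ → ℝ × ℝ) (α : ℝ → ℝ)
    (hu : ∀ θ, HasDerivAt u (u' θ) θ)
    (hdet : ∀ θ, 0 < det2 (u θ) (u' θ))
    (husym : ∀ θ, u (θ + π) = -u θ)
    (hv : ∀ θ, v θ = (det2 (u θ) (u' θ))⁻¹ • u' θ)
    (hv' : ∀ θ, HasDerivAt v (v' θ) θ)
    (hM : ∀ θ, HasDerivAt M (α θ • u' θ) θ)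
    (hMper : ∀ θ, M (θ + π) = M θ)
    (hαsym : ∀ θ, α (θ + π) = -α θ)
    (hcontα : Continuous α)
    (hcontu' : Continuous u') :
    (∀ θ, HasDerivAt (fun s => M s + betaOf u u' α s • v s)
        (betaOf u u' α θ • v' θ) θ) ∧
    (∀ d : ℝ, ∀ θ, HasDerivAt (fun s => M s + betaOf u u' α s • v s + d • v s)
        ((betaOf u u' α θ + d) • v' θ) θ) ∧
    (∀ d : ℝ, ∀ θ,
      (M θ + betaOf u u' α θ • v θ + d • v θ)
        - (M (θ + π) + betaOf u u' α (θ + π) • v (θ + π) + d • v (θ + π))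
        = (2 * d) • v θ) ∧
    (∀ d : ℝ, ∀ θ,
      (M θ + betaOf u u' α θ • v θ + d • v θ) - (betaOf u u' α θ + d) • v θ
        = M θ) := by
  have hcontu : Continuous u := continuous_iff_continuousAt.2 fun θ => (hu θ).continuousAt
  have hu'sym : Antiperiodic u' π := Antiperiodic.hasDerivAt_antiperiodic husym hu
  have hvsym : Antiperiodic v π := by
    simpa only [← hv] using antiperiodic_dual husym hu'sym
  have hN : ∀ θ, HasDerivAt (fun s => M s + betaOf u u' α s • v s)
      (betaOf u u' α θ • v' θ) θ := fun θ =>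
    hasDerivAt_add_smul_of_eq_inv_smul (hM θ)
      (hasDerivAt_betaOf hαsym husym hu'sym hcontα hcontu hcontu' θ) (hv' θ) (hv θ)
      (hdet θ).ne'
  refine ⟨hN, fun d θ => ?_, fun d θ => ?_, fun d θ => ?_⟩
  · exact ((hN θ).add ((hv' θ).const_smul d)).congr_deriv (add_smul _ _ _).symm
  · rw [hMper, betaOf_antiperiodic hαsym husym hu'sym θ, hvsym θ]
    module
  · module

/-- With N = M + βv one has N' = βv'; the v-equidistants η_d = N + dv are
constant v-width curves with v-curvature radius β + d, and the v-evolute of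
each η_d is M. -/
theorem involute_properties (u u' v v' M : ℝ → ℝ × ℝ) (α : ℝ → ℝ)
    (hu : ∀ θ, HasDerivAt u (u' θ) θ)
    (hdet : ∀ θ, 0 < det2 (u θ) (u' θ))
    (husym : ∀ θ, u (θ + π) = -u θ)
    (hv : ∀ θ, v θ = (det2 (u θ) (u' θ))⁻¹ • u' θ)
    (hv' : ∀ θ, HasDerivAt v (v' θ) θ)
    (hM : ∀ θ, HasDerivAt M (α θ • u' θ) θ)
    (hMper : ∀ θ, M (θ + π) = M θ)
    (hαsym : ∀ θ, α (θ + π) = -α θ)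
    (hcontα : Continuous α)
    (hcontu : Continuous u)
    (hcontu' : Continuous u') :
    (∀ θ, HasDerivAt (fun s => M s + betaOf u u' α s • v s)
        (betaOf u u' α θ • v' θ) θ) ∧
    (∀ d : ℝ, ∀ θ, HasDerivAt (fun s => M s + betaOf u u' α s • v s + d • v s)
        ((betaOf u u' α θ + d) • v' θ) θ) ∧
    (∀ d : ℝ, ∀ θ,
      (M θ + betaOf u u' α θ • v θ + d • v θ)
        - (M (θ + π) + betaOf u u' α (θ + π) • v (θ + π) + d • v (θ + π))
        = (2 * d) • v θ) ∧
    (∀ d : ℝ, ∀ θ,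
      (M θ + betaOf u u' α θ • v θ + d • v θ) - (betaOf u u' α θ + d) • v θ
        = M θ) :=
  involute_properties_general u u' v v' M α hu hdet husym hv hv' hM hMper hαsym hcontα hcontu'
end

section
/- The involute N has at most as many cusps as M: between any two consecutive zeros of β (cusps of N) there is at least one sign change of β' (cusp of M). -/
open Real Set

/- Pick any point `m` strictly between the consecutive zeros `θ₁ < θ₂`, so `β m ≠ 0`. The mean
value theorem on `[θ₁, m]` and on `[m, θ₂]` yields values of `β'` equal to the slopes
`β m / (m - θ₁)` and `-β m / (θ₂ - m)`, which have opposite signs. -/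

theorem exists_mul_deriv_neg_of_eq_of_ne {f f' : ℝ → ℝ} {a m b : ℝ} (ham : a < m) (hmb : m < b)
    (hf : ContinuousOn f (Icc a b)) (hff' : ∀ x ∈ Ioo a b, HasDerivAt f (f' x) x)
    (hab : f a = f b) (hm : f m ≠ f a) :
    ∃ x ∈ Ioo a b, ∃ y ∈ Ioo a b, f' x * f' y < 0 := by
  obtain ⟨x, hx, hfx⟩ := exists_hasDerivAt_eq_slope f f' ham
    (hf.mono (Icc_subset_Icc_right hmb.le))
    (fun x hx => hff' x ⟨hx.1, hx.2.trans hmb⟩)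
  obtain ⟨y, hy, hfy⟩ := exists_hasDerivAt_eq_slope f f' hmb
    (hf.mono (Icc_subset_Icc_left ham.le))
    (fun y hy => hff' y ⟨ham.trans hy.1, hy.2⟩)
  refine ⟨x, ⟨hx.1, hx.2.trans hmb⟩, y, ⟨ham.trans hy.1, hy.2⟩, ?_⟩
  have hprod : f' x * f' y = -((f m - f a) ^ 2 / ((m - a) * (b - m))) := by
    rw [hfx, hfy, ← hab]
    field_simp [(sub_pos.2 ham).ne', (sub_pos.2 hmb).ne']
    ring
  rw [hprod, neg_neg_iff_pos]
  exact div_pos (sq_pos_of_ne_zero (sub_ne_zero.2 hm)) (mul_pos (sub_pos.2 ham) (sub_pos.2 hmb))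

theorem sign_change_between_zeros_general (β β' : ℝ → ℝ)
    (hβ : ∀ θ, HasDerivAt β (β' θ) θ)
    (θ₁ θ₂ : ℝ) (hlt : θ₁ < θ₂)
    (h₁ : β θ₁ = 0) (h₂ : β θ₂ = 0)
    (hconsec : ∀ θ ∈ Set.Ioo θ₁ θ₂, β θ ≠ 0) :
    ∃ a ∈ Set.Ioo θ₁ θ₂, ∃ b ∈ Set.Ioo θ₁ θ₂, β' a * β' b < 0 := by
  have hmid : (θ₁ + θ₂) / 2 ∈ Ioo θ₁ θ₂ := ⟨by linarith, by linarith⟩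
  have hβcont : Continuous β := continuous_iff_continuousAt.2 fun θ => (hβ θ).continuousAt
  exact exists_mul_deriv_neg_of_eq_of_ne hmid.1 hmid.2 hβcont.continuousOn
    (fun θ _ => hβ θ) (h₁.trans h₂.symm) (h₁ ▸ hconsec _ hmid)

/-- Between any two consecutive zeros of β (cusps of the involute N) there is
at least one sign change of β' (a cusp of M); hence N has at most as many cusps
as M. -/
theorem sign_change_between_zeros (β β' : ℝ → ℝ)
    (hβ : ∀ θ, HasDerivAt β (β' θ) θ)
    (hβcont : Continuous β')
    (hanti : ∀ θ, β (θ + π) = -β θ)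
    (θ₁ θ₂ : ℝ) (hlt : θ₁ < θ₂)
    (h₁ : β θ₁ = 0) (h₂ : β θ₂ = 0)
    (hconsec : ∀ θ ∈ Set.Ioo θ₁ θ₂, β θ ≠ 0) :
    ∃ a ∈ Set.Ioo θ₁ θ₂, ∃ b ∈ Set.Ioo θ₁ θ₂, β' a * β' b < 0 :=
  sign_change_between_zeros_general β β' hβ θ₁ θ₂ hlt h₁ h₂ hconsec
end
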